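/- arXiv:1410.7015 — 3 statements merged into one kernel-verified Lean document; each statement's English description precedes it below -/
import Mathlib

section
/- For real parameters 0 ≤ α < β, the ratio I_β(x)/I_α(x) of modified Bessel functions of the first kind is positive and monotonically increasing on (0,∞). -/
/-- Modified Bessel function of the first kind of real order `γ`. -/
noncomputable def besselI (γ x : ℝ) : ℝ :=
  (x / 2) ^ γ * ∑' n : ℕ, (x / 2) ^ (2 * n) / (n.factorial * Real.Gamma (γ + n + 1))

/-!
Write `I_γ(x) = (x/2)^γ F_γ(x²/4)` with the entire series `F_γ(t) = ∑ tⁿ / (n! Γ(γ+n+1))`.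
Termwise, `F_γ' = F_{γ+1}` and `F_γ = (γ+1) F_{γ+1} + t F_{γ+2}`, which give the classical
relations `I_γ' = I_{γ+1} + (γ/x) I_γ` and `I_{γ+1}' = I_γ - ((γ+1)/x) I_{γ+1}`.
With them the Wronskian `W = x (I_β' I_α - I_β I_α')` is continuous on `[0, ∞)`, vanishes at `0`
because `β > 0`, and has derivative `(β² - α²) I_α I_β / x > 0`. Hence `W > 0` on `(0, ∞)`, and
`(I_β / I_α)' = W / (x I_α²) > 0`.
-/

open Real Set
open scoped Nat

theorem hasDerivAt_tsum_mul_pow {a b : ℕ → ℝ} (hab : ∀ n : ℕ, (n + 1) * a (n + 1) = b n)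
    (hb : ∀ t, Summable fun n => b n * t ^ n) (t : ℝ) :
    HasDerivAt (fun t => ∑' n, a n * t ^ n) (∑' n, b n * t ^ n) t := by
  set r := |t| + 1
  have hu : Summable fun n => |a n| * (n * r ^ (n - 1)) := by
    refine (summable_nat_add_iff 1).mp ((hb r).abs.congr fun n => ?_)
    rw [← hab, abs_mul, abs_mul, abs_of_nonneg (by positivity : (0 : ℝ) ≤ n + 1),
      abs_of_nonneg (by positivity : 0 ≤ r ^ n)]
    push_cast
    ring
  refine (hasDerivAt_tsum_of_isPreconnected hu Metric.isOpen_ball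
    (convex_ball 0 r).isPreconnected (g := fun n y => a n * y ^ n)
    (g' := fun n y => a n * (n * y ^ (n - 1)))
    (fun n y _ => (hasDerivAt_pow n y).const_mul (a n)) (fun n y hy => ?_)
    (Metric.mem_ball_self (by positivity)) ?_ (y := t) (by simp [r])).congr_deriv ?_
  · rw [norm_mul, norm_mul, norm_pow, Real.norm_natCast, Real.norm_eq_abs]
    have : ‖y‖ ≤ r := (mem_ball_zero_iff.mp hy).le
    gcongr
  · exact summable_of_ne_finset_zero (s := {0}) fun n hn => by simp_all
  · have hshift (n : ℕ) : a (n + 1) * ((n + 1 : ℕ) * t ^ n) = b n * t ^ n := by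
      rw [← hab]; push_cast; ring
    rw [tsum_eq_zero_add' ((hb t).congr fun n => (hshift n).symm)]
    simp only [CharP.cast_eq_zero, zero_mul, mul_zero, zero_add, Nat.add_sub_cancel, hshift]

theorem Real.Gamma_add_one_le_Gamma_add_nat_add_one {γ : ℝ} (hγ : 0 ≤ γ) (n : ℕ) :
    Gamma (γ + 1) ≤ Gamma (γ + n + 1) := by
  induction n with
  | zero => simp
  | succ n ih =>
    have hpos : 0 < Gamma (γ + n + 1) := Gamma_pos_of_pos (by positivity)
    rw [Nat.cast_succ, ← add_assoc, Gamma_add_one (s := γ + n + 1) (by positivity)]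
    nlinarith

noncomputable def besselICoeff (γ : ℝ) (n : ℕ) : ℝ := (n ! * Gamma (γ + n + 1))⁻¹

noncomputable def besselISeries (γ t : ℝ) : ℝ := ∑' n, besselICoeff γ n * t ^ n

section Series

variable {γ : ℝ}

theorem besselICoeff_pos (hγ : -1 < γ) (n : ℕ) : 0 < besselICoeff γ n := by
  have : 0 < γ + n + 1 := by linarith [n.cast_nonneg (α := ℝ)]
  unfold besselICoeff
  have := Gamma_pos_of_pos this
  positivity

theorem natCast_add_one_mul_besselICoeff_add_one (γ : ℝ) (n : ℕ) :
    (n + 1) * besselICoeff γ (n + 1) = besselICoeff (γ + 1) n := by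
  rw [besselICoeff, besselICoeff, Nat.factorial_succ, Nat.cast_mul, Nat.cast_succ,
    show γ + (n + 1) + 1 = γ + 1 + n + 1 by ring]
  field_simp

theorem besselICoeff_eq_mul (hγ : -1 < γ) (n : ℕ) :
    besselICoeff γ n = (γ + n + 1) * besselICoeff (γ + 1) n := by
  have : γ + n + 1 ≠ 0 := by linarith [n.cast_nonneg (α := ℝ)]
  simp only [besselICoeff, add_right_comm γ 1, Gamma_add_one this, mul_inv]
  field_simp

theorem summable_besselICoeff_mul_pow (hγ : 0 ≤ γ) (t : ℝ) :
    Summable fun n => besselICoeff γ n * t ^ n := by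
  refine .of_norm_bounded ((summable_pow_div_factorial |t|).mul_left (Gamma (γ + 1))⁻¹)
    fun n => ?_
  have hΓ := Gamma_pos_of_pos (by positivity : 0 < γ + 1)
  have hle := Gamma_add_one_le_Gamma_add_nat_add_one hγ n
  rw [norm_mul, norm_pow, Real.norm_eq_abs, Real.norm_eq_abs,
    abs_of_pos (besselICoeff_pos (by linarith) n), besselICoeff, div_eq_mul_inv]
  calc (n ! * Gamma (γ + n + 1))⁻¹ * |t| ^ n ≤ (n ! * Gamma (γ + 1))⁻¹ * |t| ^ n := by gcongr
    _ = _ := by ring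

theorem hasDerivAt_besselISeries (hγ : 0 ≤ γ) (t : ℝ) :
    HasDerivAt (besselISeries γ) (besselISeries (γ + 1) t) t :=
  hasDerivAt_tsum_mul_pow (natCast_add_one_mul_besselICoeff_add_one γ)
    (summable_besselICoeff_mul_pow (by linarith)) t

theorem besselISeries_pos (hγ : 0 ≤ γ) {t : ℝ} (ht : 0 ≤ t) : 0 < besselISeries γ t :=
  (summable_besselICoeff_mul_pow hγ t).tsum_pos
    (fun n => mul_nonneg (besselICoeff_pos (by linarith) n).le (pow_nonneg ht n)) 0
    (by simpa using besselICoeff_pos (by linarith) 0)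

theorem besselISeries_eq_add (hγ : 0 ≤ γ) (t : ℝ) :
    besselISeries γ t = (γ + 1) * besselISeries (γ + 1) t + t * besselISeries (γ + 2) t := by
  have h₁ := (summable_besselICoeff_mul_pow (by linarith : 0 ≤ γ + 1) t).hasSum.mul_left (γ + 1)
  have h₂ : HasSum (fun n : ℕ => n * besselICoeff (γ + 1) n * t ^ n)
      (t * besselISeries (γ + 2) t) := by
    rw [← hasSum_nat_add_iff' 1, Finset.sum_range_one, Nat.cast_zero, zero_mul, zero_mul, sub_zero]
    refine ((summable_besselICoeff_mul_pow (by linarith : 0 ≤ γ + 2) t).hasSum.mul_left t).congr_fun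
      fun n => ?_
    rw [show γ + 2 = γ + 1 + 1 by ring, ← natCast_add_one_mul_besselICoeff_add_one (γ + 1) n]
    push_cast
    ring
  refine ((h₁.add h₂).congr_fun fun n => ?_).tsum_eq
  rw [besselICoeff_eq_mul (by linarith)]
  ring

end Series

section Bessel

variable {γ x : ℝ}

theorem besselI_eq_rpow_mul_besselISeries (γ x : ℝ) :
    besselI γ x = (x / 2) ^ γ * besselISeries γ ((x / 2) ^ 2) := by
  simp only [besselI, besselISeries, besselICoeff, pow_mul, div_eq_inv_mul _ (_ * _)]

theorem besselI_pos (hγ : 0 ≤ γ) (hx : 0 < x) : 0 < besselI γ x := by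
  rw [besselI_eq_rpow_mul_besselISeries]
  exact mul_pos (rpow_pos_of_pos (by positivity) γ) (besselISeries_pos hγ (by positivity))

theorem besselI_zero_right (hγ : 0 < γ) : besselI γ 0 = 0 := by
  simp [besselI, zero_rpow hγ.ne']

theorem continuous_besselI (hγ : 0 ≤ γ) : Continuous (besselI γ) := by
  have hF : Continuous (besselISeries γ) :=
    continuous_iff_continuousAt.mpr fun t => (hasDerivAt_besselISeries hγ t).continuousAt
  simp only [funext (besselI_eq_rpow_mul_besselISeries γ)]
  fun_prop (disch := exact hγ)

theorem hasDerivAt_besselI (hγ : 0 ≤ γ) (hx : x ≠ 0) :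
    HasDerivAt (besselI γ) (besselI (γ + 1) x + γ / x * besselI γ x) x := by
  have hx2 : x / 2 ≠ 0 := by positivity
  have hpow := (hasDerivAt_rpow_const (p := γ) (Or.inl hx2)).comp x ((hasDerivAt_id x).div_const 2)
  have hser := (hasDerivAt_besselISeries hγ ((x / 2) ^ 2)).comp x
    (((hasDerivAt_id x).div_const 2).pow 2)
  simp only [funext (besselI_eq_rpow_mul_besselISeries _)]
  refine (hpow.mul hser).congr_deriv ?_
  rw [rpow_add_one hx2, rpow_sub_one hx2]
  simp only [Function.comp_apply, Pi.pow_apply, id]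
  field_simp
  ring

theorem besselI_eq_add (hγ : 0 ≤ γ) (hx : x ≠ 0) :
    besselI γ x = 2 * (γ + 1) / x * besselI (γ + 1) x + besselI (γ + 2) x := by
  have hx2 : x / 2 ≠ 0 := by positivity
  simp only [besselI_eq_rpow_mul_besselISeries]
  rw [besselISeries_eq_add hγ, show γ + 2 = γ + 1 + 1 by ring, rpow_add_one hx2 (γ + 1),
    rpow_add_one hx2 γ]
  field_simp

theorem hasDerivAt_besselI_add_one (hγ : 0 ≤ γ) (hx : x ≠ 0) :
    HasDerivAt (besselI (γ + 1)) (besselI γ x - (γ + 1) / x * besselI (γ + 1) x) x := by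
  refine (hasDerivAt_besselI (by linarith) hx).congr_deriv ?_
  rw [besselI_eq_add hγ hx, add_assoc, one_add_one_eq_two]
  field_simp
  ring

/-- `x (I_β' I_α - I_β I_α')`, expanded by `hasDerivAt_besselI` so that it is continuous at `0`. -/
noncomputable def besselIWronskian (α β x : ℝ) : ℝ :=
  (β - α) * besselI β x * besselI α x +
    x * (besselI (β + 1) x * besselI α x - besselI β x * besselI (α + 1) x)

variable {α β : ℝ}

theorem hasDerivAt_besselIWronskian (hα : 0 ≤ α) (hβ : 0 ≤ β) (hx : x ≠ 0) :
    HasDerivAt (besselIWronskian α β) ((β ^ 2 - α ^ 2) / x * besselI α x * besselI β x) x := by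
  have hIα := hasDerivAt_besselI hα hx
  have hIβ := hasDerivAt_besselI hβ hx
  have hIα₁ := hasDerivAt_besselI_add_one hα hx
  have hIβ₁ := hasDerivAt_besselI_add_one hβ hx
  refine ((((hIβ.const_mul (β - α)).mul hIα).add
    ((hasDerivAt_id x).mul ((hIβ₁.mul hIα).sub (hIβ.mul hIα₁))))).congr_deriv ?_
  simp only [id, Pi.mul_apply, Pi.sub_apply]
  field_simp
  ring

theorem continuous_besselIWronskian (hα : 0 ≤ α) (hβ : 0 ≤ β) :
    Continuous (besselIWronskian α β) := by
  have := continuous_besselI hα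
  have := continuous_besselI hβ
  have := continuous_besselI (by linarith : 0 ≤ α + 1)
  have := continuous_besselI (by linarith : 0 ≤ β + 1)
  unfold besselIWronskian
  fun_prop

theorem besselIWronskian_pos (hα : 0 ≤ α) (hαβ : α < β) (hx : 0 < x) :
    0 < besselIWronskian α β x := by
  have hβ : 0 ≤ β := by linarith
  have hmono : StrictMonoOn (besselIWronskian α β) (Ici 0) := by
    refine strictMonoOn_of_deriv_pos (convex_Ici 0)
      (continuous_besselIWronskian hα hβ).continuousOn fun y hy => ?_
    rw [interior_Ici, mem_Ioi] at hy
    rw [(hasDerivAt_besselIWronskian hα hβ hy.ne').deriv]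
    have : 0 < β ^ 2 - α ^ 2 := by nlinarith
    have := besselI_pos hα hy
    have := besselI_pos hβ hy
    positivity
  have hzero : besselIWronskian α β 0 = 0 := by
    simp [besselIWronskian, besselI_zero_right (hα.trans_lt hαβ)]
  simpa [hzero] using hmono (mem_Ici.2 le_rfl) hx.le hx

theorem hasDerivAt_besselI_div (hα : 0 ≤ α) (hβ : 0 ≤ β) (hx : 0 < x) :
    HasDerivAt (fun y => besselI β y / besselI α y)
      (besselIWronskian α β x / (x * besselI α x ^ 2)) x := by
  have hIα := besselI_pos hα hx
  refine ((hasDerivAt_besselI hβ hx.ne').div (hasDerivAt_besselI hα hx.ne') hIα.ne').congr_deriv ?_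
  unfold besselIWronskian
  field_simp
  ring

theorem strictMonoOn_besselI_div (hα : 0 ≤ α) (hαβ : α < β) :
    StrictMonoOn (fun x => besselI β x / besselI α x) (Ioi 0) := by
  have hβ : 0 ≤ β := by linarith
  refine strictMonoOn_of_deriv_pos (convex_Ioi 0) (fun x hx => ?_) fun x hx => ?_
  · exact (hasDerivAt_besselI_div hα hβ hx).continuousAt.continuousWithinAt
  · rw [interior_Ioi, mem_Ioi] at hx
    rw [(hasDerivAt_besselI_div hα hβ hx).deriv]
    have := besselIWronskian_pos hα hαβ hx
    have := besselI_pos hα hx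
    positivity

end Bessel

theorem besselI_ratio_pos_monotone (α β : ℝ) (hα : 0 ≤ α) (hαβ : α < β) :
    (∀ x ∈ Set.Ioi (0 : ℝ), 0 < besselI β x / besselI α x) ∧
    MonotoneOn (fun x => besselI β x / besselI α x) (Set.Ioi (0 : ℝ)) :=
  ⟨fun _ hx => div_pos (besselI_pos (hα.trans hαβ.le) hx) (besselI_pos hα hx),
    (strictMonoOn_besselI_div hα hαβ).monotoneOn⟩
end

section
/- Let f, g: ℝ → ℝ with g(x) = Σ-type partial summation relation g(x) - g(a) = li(x) - li(a) - (x - f(x))/log(x) + (a - f(a))/log(a) - ∫_a^x (t - f(t))/(t·log(t)²) dt for x ≥ a > 2. If |f(t) - t| ≤ (√t/(8π))·log(t)·(log(t) - 3) for all t ≥ a, then |g(x) - li(x)| ≤ (√x/(8π))·(log(x) - 3) + |g(a) - li(a) - (f(a) - a)/log(a)| + (√x - √a)/(4π) for all x ≥ a. -/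
open Real MeasureTheory intervalIntegral

/-!
Rearranging the partial-summation identity gives
`g x - li x = (g a - li a - (f a - a)/log a) + (f x - x)/log x - ∫ₐˣ (t - f t)/(t log² t) dt`.
The hypothesis on `f` bounds the middle term by `√x (log x - 3)/(8π)` and the integrand by
`(log t - 3)/(8π √t log t) ≤ 1/(8π √t)`, whose integral is `(√x - √a)/(4π)`.
-/

theorem intervalIntegrable_inv_sqrt {a b : ℝ} (ha : 0 < a) (hab : a ≤ b) :
    IntervalIntegrable (fun t => (√t)⁻¹) volume a b :=
  intervalIntegral.intervalIntegrable_inv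
    (fun _ ht => (sqrt_pos.2 (ha.trans_le (Set.uIcc_of_le hab ▸ ht).1)).ne')
    continuous_sqrt.continuousOn

theorem integral_inv_sqrt {a b : ℝ} (ha : 0 < a) (hab : a ≤ b) :
    ∫ t in a..b, (√t)⁻¹ = 2 * (√b - √a) := by
  have hderiv : ∀ t ∈ Set.uIcc a b, HasDerivAt (fun u => 2 * √u) (√t)⁻¹ t := by
    intro t ht
    have ht0 : 0 < t := ha.trans_le (Set.uIcc_of_le hab ▸ ht).1
    exact ((hasDerivAt_sqrt ht0.ne').const_mul 2).congr_deriv (by ring)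
  rw [integral_eq_sub_of_hasDerivAt hderiv (intervalIntegrable_inv_sqrt ha hab)]
  ring

theorem abs_intervalIntegral_le_of_abs_le_inv_sqrt {φ : ℝ → ℝ} {a b K : ℝ} (ha : 0 < a)
    (hab : a ≤ b) (hφ : ∀ t ∈ Set.Ioc a b, |φ t| ≤ (√t)⁻¹ / K) :
    |∫ t in a..b, φ t| ≤ 2 * (√b - √a) / K := by
  calc |∫ t in a..b, φ t| ≤ ∫ t in a..b, (√t)⁻¹ / K :=
        norm_integral_le_of_norm_le (f := φ) hab (ae_of_all _ hφ)
          ((intervalIntegrable_inv_sqrt ha hab).div_const K)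
    _ = 2 * (√b - √a) / K := by rw [intervalIntegral.integral_div, integral_inv_sqrt ha hab]

theorem abs_div_mul_log_sq_le {t E K : ℝ} (ht : 1 < t) (hK : 0 < K)
    (hE : |E| ≤ √t / K * log t * (log t - 3)) :
    |E / (t * log t ^ 2)| ≤ (√t)⁻¹ / K := by
  have ht0 : 0 < t := by linarith
  have hlog : 0 < log t := log_pos ht
  have hden : 0 < t * log t ^ 2 := by positivity
  rw [abs_div, abs_of_pos hden, div_le_iff₀ hden]
  calc |E| ≤ √t / K * log t * (log t - 3) := hE
    _ ≤ √t / K * log t * log t := by gcongr; linarith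
    _ = (√t)⁻¹ / K * (t * log t ^ 2) := by
      field_simp
      rw [sq_sqrt ht0.le]

/-- Partial-summation transfer of a Schoenfeld-type bound from `f` (e.g. `ψ` or `ϑ`) to
`g` (e.g. `π*` or `π`), relative to a logarithmic-integral function `li`. -/
theorem partial_summation_transfer (f g li : ℝ → ℝ) (a : ℝ) (ha : 2 < a)
    (hrel : ∀ x : ℝ, a ≤ x →
      g x - g a = li x - li a - (x - f x) / Real.log x + (a - f a) / Real.log a
        - ∫ t in a..x, (t - f t) / (t * Real.log t ^ 2))
    (hf : ∀ t : ℝ, a ≤ t →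
      |f t - t| ≤ Real.sqrt t / (8 * Real.pi) * Real.log t * (Real.log t - 3)) :
    ∀ x : ℝ, a ≤ x →
      |g x - li x| ≤ Real.sqrt x / (8 * Real.pi) * (Real.log x - 3)
        + |g a - li a - (f a - a) / Real.log a|
        + (Real.sqrt x - Real.sqrt a) / (4 * Real.pi) := by
  intro x hx
  have hlogx : 0 < log x := log_pos (by linarith)
  have hboundary : |(f x - x) / log x| ≤ √x / (8 * π) * (log x - 3) := by
    rw [abs_div, abs_of_pos hlogx, div_le_iff₀ hlogx]
    linarith [hf x hx]
  have hintegral : |∫ t in a..x, (t - f t) / (t * log t ^ 2)| ≤ (√x - √a) / (4 * π) := by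
    refine (abs_intervalIntegral_le_of_abs_le_inv_sqrt (K := 8 * π) (by linarith) hx
      fun t ht => abs_div_mul_log_sq_le (by linarith [ht.1]) (by positivity)
        (abs_sub_comm (f t) t ▸ hf t ht.1.le)).trans_eq ?_
    ring
  have hsplit : g x - li x = (f x - x) / log x + (g a - li a - (f a - a) / log a)
      - ∫ t in a..x, (t - f t) / (t * log t ^ 2) := by
    rw [sub_eq_iff_eq_add.1 (hrel x hx)]
    ring
  rw [hsplit]
  calc _ ≤ |(f x - x) / log x + (g a - li a - (f a - a) / log a)|
        + |∫ t in a..x, (t - f t) / (t * log t ^ 2)| := abs_sub _ _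
    _ ≤ |(f x - x) / log x| + |g a - li a - (f a - a) / log a|
        + |∫ t in a..x, (t - f t) / (t * log t ^ 2)| := by gcongr; exact abs_add_le _ _
    _ ≤ _ := by linarith
end

section
/- Let x ≥ 100 and 0 < ε ≤ 1/100, and set I = [e^{-ε}x, e^{ε}x]. Then the sum over proper prime powers p^m ∈ I with m ≥ 2 of 1/m is at most 4.01·ε·√x + log(log(2x²)). -/
/-!
For a fixed exponent `m ≥ 2`, the primes `p` with `p ^ m ∈ [e^{-ε}x, e^{ε}x]` lie in
`[e^{-ε/m} x^{1/m}, e^{ε/m} x^{1/m}]`, an interval of length at most `3 ε √x / m`, so there are at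
most `3 ε √x / m + 1` of them. Since `2 ^ m ≤ e^ε x ≤ 2x`, only `m ≤ log (2x²)` occur. Summing
`(3 ε √x / m + 1) / m` over `2 ≤ m ≤ log (2x²)`, with `∑ 1/m² ≤ 1` and `∑_{m=2}^{M} 1/m ≤ log M`,
gives `3 ε √x + log log (2x²)`.
-/

open Real Finset

lemma natCast_card_le_of_forall_mem_Icc {s : Finset ℕ} {a b : ℝ} (hab : a ≤ b)
    (hs : ∀ n ∈ s, a ≤ n ∧ (n : ℝ) ≤ b) : (#s : ℝ) ≤ b - a + 1 := by
  rcases s.eq_empty_or_nonempty with rfl | hne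
  · simp only [card_empty, Nat.cast_zero]
    linarith
  have hcard : #s ≤ s.max' hne + 1 - s.min' hne :=
    (card_le_card fun n hn => mem_Icc.2 ⟨min'_le s n hn, le_max' s n hn⟩).trans_eq
      (Nat.card_Icc _ _)
  have hle : s.min' hne ≤ s.max' hne := min'_le_max' s hne
  have ha := (hs _ (min'_mem s hne)).1
  have hb := (hs _ (max'_mem s hne)).2
  calc (#s : ℝ) ≤ ((s.max' hne + 1 - s.min' hne : ℕ) : ℝ) := by exact_mod_cast hcard
    _ = s.max' hne - s.min' hne + 1 := by rw [Nat.cast_sub (by omega)]; push_cast; ring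
    _ ≤ b - a + 1 := by linarith

lemma natCast_card_le_rpow_inv_sub_rpow_inv {s : Finset ℕ} {m : ℕ} (hm : m ≠ 0) {a b : ℝ}
    (ha : 0 ≤ a) (hab : a ≤ b) (hs : ∀ n ∈ s, a ≤ (n : ℝ) ^ m ∧ (n : ℝ) ^ m ≤ b) :
    (#s : ℝ) ≤ b ^ (m⁻¹ : ℝ) - a ^ (m⁻¹ : ℝ) + 1 := by
  have hm : (0 : ℝ) < m := by positivity
  refine natCast_card_le_of_forall_mem_Icc (rpow_le_rpow ha hab (by positivity)) fun n hn => ?_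
  rw [rpow_inv_le_iff_of_pos ha n.cast_nonneg hm, le_rpow_inv_iff_of_pos n.cast_nonneg
    (ha.trans hab) hm, rpow_natCast]
  exact hs n hn

lemma exp_sub_exp_neg_le {t : ℝ} (ht0 : 0 ≤ t) (ht1 : t ≤ 1) : exp t - exp (-t) ≤ 3 * t := by
  have h := abs_exp_sub_one_le (x := t) (by rwa [abs_of_nonneg ht0])
  rw [abs_of_nonneg (by linarith [add_one_le_exp t]), abs_of_nonneg ht0] at h
  linarith [add_one_le_exp (-t)]

lemma exp_mul_rpow_inv_sub_le {x ε : ℝ} {m : ℕ} (hm : 2 ≤ m) (hx : 1 ≤ x) (hε0 : 0 ≤ ε)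
    (hε : ε ≤ 1) :
    (exp ε * x) ^ (m⁻¹ : ℝ) - (exp (-ε) * x) ^ (m⁻¹ : ℝ) ≤ 3 * ε / m * √x := by
  have hm' : (2 : ℝ) ≤ m := by exact_mod_cast hm
  have hεm : ε / m ≤ 1 := (div_le_one (by positivity)).2 (by linarith)
  have hroot : x ^ (m⁻¹ : ℝ) ≤ √x := by
    rw [sqrt_eq_rpow, ← one_div]
    exact rpow_le_rpow_of_exponent_le hx (one_div_le_one_div_of_le two_pos hm')
  rw [mul_rpow (exp_pos _).le (by linarith), mul_rpow (exp_pos _).le (by linarith), ← exp_mul,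
    ← exp_mul, ← sub_mul, neg_mul, ← div_eq_mul_inv, mul_div_assoc]
  exact mul_le_mul (exp_sub_exp_neg_le (by positivity) hεm) hroot (by positivity) (by positivity)

lemma sum_Icc_two_inv_sq_le_one (M : ℕ) : ∑ m ∈ Icc 2 M, ((m : ℝ) ^ 2)⁻¹ ≤ 1 := by
  have hIcc : Icc 2 M = Ioo 1 (M + 1) := by ext; simp only [mem_Icc, mem_Ioo]; omega
  rw [hIcc]
  simpa [one_add_one_eq_two] using sum_Ioo_inv_sq_le (α := ℝ) 1 (M + 1)

lemma sum_Icc_two_inv_le_log (M : ℕ) : ∑ m ∈ Icc 2 M, (m : ℝ)⁻¹ ≤ log M := by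
  rcases M.eq_zero_or_pos with rfl | hM
  · simp
  have h := harmonic_le_one_add_log M
  rw [harmonic_eq_sum_Icc, ← add_sum_Ioc_eq_sum_Icc hM] at h
  push_cast at h
  rw [← Icc_add_one_left_eq_Ioc, inv_one] at h
  linarith

lemma natCast_le_log_two_mul_sq {x : ℝ} {m : ℕ} (hx : 3 ≤ x) (h : (2 : ℝ) ^ m ≤ 2 * x) :
    (m : ℝ) ≤ log (2 * x ^ 2) := by
  have hlog : m * log 2 ≤ log 2 + log x := by
    rw [← log_pow, ← log_mul two_ne_zero (by linarith)]
    exact log_le_log (by positivity) h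
  have hx1 : 1 ≤ log x := by
    rw [le_log_iff_exp_le (by linarith)]
    linarith [exp_one_lt_d9]
  rw [log_mul two_ne_zero (by positivity), log_pow]
  push_cast
  nlinarith [log_two_gt_d9, log_two_lt_d9]

lemma le_and_le_log_two_mul_sq_of_pow_le {x : ℝ} {p m : ℕ} (hp : 2 ≤ p) (hm : m ≠ 0) (hx : 3 ≤ x)
    (h : (p : ℝ) ^ m ≤ 2 * x) : (p : ℝ) ≤ 2 * x ∧ (m : ℝ) ≤ log (2 * x ^ 2) := by
  have hp' : (2 : ℝ) ≤ p := by exact_mod_cast hp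
  exact ⟨(le_self_pow₀ (by linarith) hm).trans h,
    natCast_le_log_two_mul_sq hx ((pow_le_pow_left₀ zero_le_two hp' m).trans h)⟩

lemma finsum_mem_eq_sum_sum_filter {α β M : Type*} [AddCommMonoid M] {P : α × β → Prop}
    [DecidablePred P] (f : α × β → M) {s : Finset α} {t : Finset β}
    (h : ∀ ab, P ab → ab.1 ∈ s ∧ ab.2 ∈ t) :
    ∑ᶠ (ab) (_ : P ab), f ab = ∑ b ∈ t, ∑ a ∈ s with P (a, b), f (a, b) := by
  rw [finsum_cond_eq_sum_of_cond_iff f (t := (s ×ˢ t).filter P), sum_filter, sum_product_right]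
  · simp only [sum_filter]
  · intro ab _
    simp only [mem_filter, mem_product]
    exact ⟨fun hP => ⟨h ab hP, hP⟩, And.right⟩

lemma natCast_card_le_of_pow_mem_exp_Icc {s : Finset ℕ} {m : ℕ} (hm : 2 ≤ m) {x ε : ℝ}
    (hx : 1 ≤ x) (hε0 : 0 ≤ ε) (hε : ε ≤ 1)
    (hs : ∀ n ∈ s, exp (-ε) * x ≤ (n : ℝ) ^ m ∧ (n : ℝ) ^ m ≤ exp ε * x) :
    (#s : ℝ) ≤ 3 * ε / m * √x + 1 := by
  have hab : exp (-ε) * x ≤ exp ε * x := by gcongr; linarith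
  linarith [natCast_card_le_rpow_inv_sub_rpow_inv (by omega) (by positivity) hab hs,
    exp_mul_rpow_inv_sub_le hm hx hε0 hε]

/-- For `x ≥ 100` and `0 < ε ≤ 1/100`, the sum of `1/m` over proper prime powers
`p^m ∈ [e^{-ε}x, e^{ε}x]` with `m ≥ 2` is at most `4.01 ε √x + log log(2x²)`. -/
theorem prime_power_sum_bound (x ε : ℝ) (hx : 100 ≤ x) (hε0 : 0 < ε) (hε : ε ≤ 1 / 100) :
    (∑ᶠ (pm : ℕ × ℕ) (_ : pm.1.Prime ∧ 2 ≤ pm.2 ∧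
        Real.exp (-ε) * x ≤ (pm.1 : ℝ) ^ pm.2 ∧ (pm.1 : ℝ) ^ pm.2 ≤ Real.exp ε * x),
        (1 : ℝ) / pm.2)
      ≤ 4.01 * ε * Real.sqrt x + Real.log (Real.log (2 * x ^ 2)) := by
  classical
  set M := ⌊log (2 * x ^ 2)⌋₊
  have hexp : exp ε ≤ 2 := (le_log_iff_exp_le two_pos).1 (by linarith [log_two_gt_d9])
  have hmem : ∀ pm : ℕ × ℕ, (pm.1.Prime ∧ 2 ≤ pm.2 ∧
      exp (-ε) * x ≤ (pm.1 : ℝ) ^ pm.2 ∧ (pm.1 : ℝ) ^ pm.2 ≤ exp ε * x) →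
      pm.1 ∈ range (⌊2 * x⌋₊ + 1) ∧ pm.2 ∈ Icc 2 M := by
    rintro ⟨p, m⟩ ⟨hp, hm, -, hpm⟩
    obtain ⟨hp2x, hm2x⟩ := le_and_le_log_two_mul_sq_of_pow_le (x := x) hp.two_le (by omega)
      (by linarith) (hpm.trans (by gcongr))
    exact ⟨mem_range.2 (Nat.lt_succ_of_le (Nat.le_floor hp2x)), mem_Icc.2 ⟨hm, Nat.le_floor hm2x⟩⟩
  have hinner : ∀ m ∈ Icc 2 M, ∑ p ∈ range (⌊2 * x⌋₊ + 1) with (Nat.Prime p ∧ 2 ≤ m ∧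
      exp (-ε) * x ≤ (p : ℝ) ^ m ∧ (p : ℝ) ^ m ≤ exp ε * x), (1 : ℝ) / m
      ≤ 3 * ε * √x * ((m : ℝ) ^ 2)⁻¹ + (m : ℝ)⁻¹ := by
    intro m hm
    rw [sum_const, nsmul_eq_mul]
    calc _ ≤ (3 * ε / m * √x + 1) * (1 / m) := by
          gcongr
          exact natCast_card_le_of_pow_mem_exp_Icc (mem_Icc.1 hm).1 (by linarith) hε0.le
            (by linarith) fun p hp => (mem_filter.1 hp).2.2.2
      _ = _ := by ring
  have hlog : (1 : ℝ) ≤ log (2 * x ^ 2) := by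
    exact_mod_cast natCast_le_log_two_mul_sq (m := 1) (by linarith) (by linarith)
  have hM : 1 ≤ M := Nat.le_floor (by exact_mod_cast hlog)
  calc _ = _ := finsum_mem_eq_sum_sum_filter _ hmem
    _ ≤ ∑ m ∈ Icc 2 M, (3 * ε * √x * ((m : ℝ) ^ 2)⁻¹ + (m : ℝ)⁻¹) := sum_le_sum hinner
    _ = 3 * ε * √x * ∑ m ∈ Icc 2 M, ((m : ℝ) ^ 2)⁻¹ + ∑ m ∈ Icc 2 M, (m : ℝ)⁻¹ := by
      rw [sum_add_distrib, mul_sum]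
    _ ≤ 3 * ε * √x * 1 + log M := by
      gcongr
      exacts [sum_Icc_two_inv_sq_le_one M, sum_Icc_two_inv_le_log M]
    _ ≤ 4.01 * ε * √x + log (log (2 * x ^ 2)) := by
      rw [mul_one]
      gcongr
      · norm_num
      · exact Nat.floor_le (by linarith)
end
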